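/- arXiv:1711.02705 — 6 statements merged into one kernel-verified Lean document; each statement's English description precedes it below -/
import Mathlib

section
/- Let B be a real d × N matrix. Then ρ(B) = r(B) if and only if the row space Row(B) ⊆ ℝ^N is a rational subspace. Here ρ(B) is the rank of the additive subgroup of ℝ^d generated by the columns of B (equivalently, the dimension over ℚ of the ℚ-linear span of the columns), r(B) is the rank of the matrix B (the dimension of the ℝ-linear span of its columns, equal to dim Row(B)), and a linear subspace of ℝ^N is called rational if it is spanned by vectors all of whose coordinates are rational. -/
/-- `ρ(M)`: the rank of the additive subgroup of `ℝ^d` generated by the columns of the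
real `d × N` matrix `M`, i.e. the dimension over `ℚ` of the `ℚ`-linear span of the
columns of `M` inside `ℝ^d` viewed as a `ℚ`-vector space. -/
noncomputable def latticeRank {d N : ℕ} (M : Matrix (Fin d) (Fin N) ℝ) : ℕ :=
  Module.finrank ℚ
    (Submodule.span ℚ (Set.range fun j : Fin N => fun i : Fin d => M i j))

/-- A linear subspace of `ℝ^N` is rational if it is spanned by vectors all of whose
coordinates are rational. -/
def IsRationalSubspace {N : ℕ} (L : Submodule ℝ (Fin N → ℝ)) : Prop :=
  ∃ S : Set (Fin N → ℚ),
    L = Submodule.span ℝ ((fun v : Fin N → ℚ => fun i => (v i : ℝ)) '' S)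

/-! Write `Row B` for the row space. Expressing the columns of `B` in a `ℚ`-basis of their
`ℚ`-span factors `B = U * Q` with `Q` rational with `ρ(B)` rows, so `Row B` lies in a rational
subspace of dimension at most `ρ(B)`; if `ρ(B) = r(B)` the two coincide. Conversely, if `Row B`
is rational it has a basis of `r(B)` rational vectors, and expressing the rows of `B` in it
factors `B = A * Q` with `Q` rational with `r(B)` rows, which makes the columns of `B`
`ℚ`-combinations of the `r(B)` columns of `A`, so `ρ(B) ≤ r(B)`. The inequality `r(B) ≤ ρ(B)`
always holds, since a `ℚ`-basis of the columns' `ℚ`-span also spans their `ℝ`-span. -/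

open Set Submodule Module

theorem finrank_span_le_finrank_span_of_tower (K L : Type*) {V : Type*} [Field K] [Ring L]
    [StrongRankCondition L] [Algebra K L] [AddCommGroup V] [Module K V] [Module L V]
    [IsScalarTower K L V] (s : Set V) [FiniteDimensional K (span K s)] :
    finrank L (span L s) ≤ finrank K (span K s) := by
  let b := Module.finBasis K (span K s)
  have hb : span K (range (Subtype.val ∘ b)) = span K s := by
    rw [range_comp, ← coe_subtype, span_image, b.span_eq, map_subtype_top]
  calc finrank L (span L s) = finrank L (span L (range (Subtype.val ∘ b))) := by
        rw [← span_span_of_tower K L (range _), hb, span_span_of_tower]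
    _ ≤ Fintype.card (Fin (finrank K (span K s))) := finrank_range_le_card _
    _ = finrank K (span K s) := Fintype.card_fin _

namespace Matrix

variable {R : Type*} {m n ι : Type*} [CommSemiring R] [Fintype ι]

theorem span_rows_mul_le (A : Matrix m ι R) (C : Matrix ι n R) :
    span R (range (A * C).row) ≤ span R (range C.row) := by
  rw [span_le, ← range_vecMulLinear]
  rintro _ ⟨i, rfl⟩
  exact ⟨A i, rfl⟩

theorem exists_eq_mul_of_span_rows_le {B : Matrix m n R} {C : Matrix ι n R}
    (h : span R (range B.row) ≤ span R (range C.row)) : ∃ A : Matrix m ι R, B = A * C := by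
  rw [span_le, ← range_vecMulLinear] at h
  choose A hA using fun i => h (mem_range_self (f := B.row) i)
  exact ⟨A, funext fun i => (hA i).symm⟩

end Matrix

open Matrix

section LatticeRank

variable {d N : ℕ}

theorem rank_le_latticeRank (B : Matrix (Fin d) (Fin N) ℝ) : B.rank ≤ latticeRank B := by
  have := FiniteDimensional.span_of_finite ℚ (finite_range B.col)
  rw [rank_eq_finrank_span_cols]
  exact finrank_span_le_finrank_span_of_tower ℚ ℝ _

theorem latticeRank_mul_map_ratCast_le {ι : Type*} [Fintype ι] (A : Matrix (Fin d) ι ℝ)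
    (Q : Matrix ι (Fin N) ℚ) : latticeRank (A * Q.map ((↑) : ℚ → ℝ)) ≤ Fintype.card ι := by
  have hcols : span ℚ (range (A * Q.map ((↑) : ℚ → ℝ)).col) ≤ span ℚ (range A.col) := by
    rw [span_le]
    rintro _ ⟨j, rfl⟩
    rw [SetLike.mem_coe, mem_span_range_iff_exists_fun]
    refine ⟨fun k => Q k j, funext fun i => ?_⟩
    simp [mul_apply, Rat.smul_def, mul_comm]
  have := FiniteDimensional.span_of_finite ℚ (finite_range A.col)
  exact (finrank_mono hcols).trans (finrank_range_le_card _)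

theorem latticeRank_le_card_of_span_rows_le {ι : Type*} [Fintype ι]
    {B : Matrix (Fin d) (Fin N) ℝ} {Q : Matrix ι (Fin N) ℚ}
    (h : span ℝ (range B.row) ≤ span ℝ (range (Q.map ((↑) : ℚ → ℝ)).row)) :
    latticeRank B ≤ Fintype.card ι := by
  obtain ⟨A, rfl⟩ := exists_eq_mul_of_span_rows_le h
  exact latticeRank_mul_map_ratCast_le A Q

theorem exists_span_rows_le_span_rows_map_ratCast (B : Matrix (Fin d) (Fin N) ℝ) :
    ∃ Q : Matrix (Fin (latticeRank B)) (Fin N) ℚ,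
      span ℝ (range B.row) ≤ span ℝ (range (Q.map ((↑) : ℚ → ℝ)).row) := by
  have := FiniteDimensional.span_of_finite ℚ (finite_range B.col)
  let b := Module.finBasis ℚ (span ℚ (range B.col))
  let c : Fin N → span ℚ (range B.col) := fun j => ⟨B.col j, subset_span (mem_range_self j)⟩
  let Q : Matrix (Fin (latticeRank B)) (Fin N) ℚ := of fun k j => b.repr (c j) k
  let U : Matrix (Fin d) (Fin (latticeRank B)) ℝ := of fun i k => (b k : Fin d → ℝ) i
  have hB : B = U * Q.map ((↑) : ℚ → ℝ) := by
    ext i j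
    calc B i j = (c j : Fin d → ℝ) i := rfl
      _ = ((∑ k, b.repr (c j) k • b k : span ℚ (range B.col)) : Fin d → ℝ) i := by
        rw [b.sum_repr]
      _ = (U * Q.map ((↑) : ℚ → ℝ)) i j := by
        simp only [coe_sum, Finset.sum_apply, coe_smul, Pi.smul_apply, Rat.smul_def, mul_apply,
          of_apply, map_apply, mul_comm, U, Q]
        rfl
  refine ⟨Q, ?_⟩
  calc span ℝ (range B.row) = span ℝ (range (U * Q.map ((↑) : ℚ → ℝ)).row) := by rw [← hB]
    _ ≤ _ := span_rows_mul_le U _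

theorem isRationalSubspace_span_rows_map_ratCast {ι : Type*} (Q : Matrix ι (Fin N) ℚ) :
    IsRationalSubspace (span ℝ (range (Q.map ((↑) : ℚ → ℝ)).row)) :=
  ⟨range Q.row, by rw [← range_comp]; rfl⟩

theorem IsRationalSubspace.exists_span_rows_map_ratCast {L : Submodule ℝ (Fin N → ℝ)}
    (hL : IsRationalSubspace L) :
    ∃ Q : Matrix (Fin (finrank ℝ L)) (Fin N) ℚ, span ℝ (range (Q.map ((↑) : ℚ → ℝ)).row) = L := by
  obtain ⟨S, rfl⟩ := hL
  set castRat : (Fin N → ℚ) → Fin N → ℝ := fun v i => (v i : ℝ)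
  obtain ⟨κ, a, -, hspan, hli⟩ := exists_linearIndependent' ℝ fun v : S => castRat v
  have : Fintype κ := have := hli.finite; Fintype.ofFinite κ
  rw [image_eq_range, ← hspan, finrank_span_eq_card hli]
  let e := Fintype.equivFin κ
  exact ⟨fun k => a (e.symm k), by rw [← e.symm.surjective.range_comp]; rfl⟩

end LatticeRank

/-- For a real `d × N` matrix `B`, the lattice rank `ρ(B)` equals the
matrix rank `r(B)` if and only if the row space of `B` is a rational subspace of `ℝ^N`. -/
theorem latticeRank_eq_rank_iff_rowSpace_rational {d N : ℕ}
    (B : Matrix (Fin d) (Fin N) ℝ) :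
    latticeRank B = B.rank ↔
      IsRationalSubspace (Submodule.span ℝ (Set.range fun i : Fin d => B i)) := by
  have hrank : B.rank = finrank ℝ (span ℝ (range B.row)) := B.rank_eq_finrank_span_row
  constructor
  · intro h
    obtain ⟨Q, hle⟩ := exists_span_rows_le_span_rows_map_ratCast B
    have hrowSpace : span ℝ (range B.row) = span ℝ (range (Q.map ((↑) : ℚ → ℝ)).row) := by
      refine eq_of_le_of_finrank_le hle ?_
      calc finrank ℝ (span ℝ (range (Q.map ((↑) : ℚ → ℝ)).row))
          ≤ Fintype.card (Fin (latticeRank B)) := finrank_range_le_card _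
        _ = finrank ℝ (span ℝ (range B.row)) := by rw [Fintype.card_fin, h, hrank]
    exact hrowSpace ▸ isRationalSubspace_span_rows_map_ratCast Q
  · intro h
    obtain ⟨Q, hQ⟩ := h.exists_span_rows_map_ratCast
    refine le_antisymm ?_ (rank_le_latticeRank B)
    calc latticeRank B ≤ Fintype.card (Fin _) := latticeRank_le_card_of_span_rows_le hQ.ge
      _ = B.rank := by rw [Fintype.card_fin, hrank]; rfl
end

section
/- Let A be a real d × N matrix with row space Row(A) ⊆ ℝ^N, and let ρ(A) denote the rank of the additive subgroup of ℝ^d generated by the columns of A. Then there exists a unique linear subspace L̂ of ℝ^N such that: (i) L̂ is a rational subspace (spanned by vectors in ℚ^N); (ii) Row(A) ⊆ L̂; and (iii) dim L̂ = ρ(A). Moreover, L̂ satisfies the universal property that every rational subspace of ℝ^N containing Row(A) contains L̂; that is, L̂ is the unique minimal rational lift of A, and every rational lift of A is a lift of L̂. -/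
/-!
Extending scalars from `ℚ` to `ℝ` preserves linear independence, so `V ↦ span_ℝ V` preserves the
dimension of subspaces of `ℚ^N`; since the dot product is nondegenerate over both fields, it
follows that `span_ℝ (Wᗮ) = (span_ℝ W)ᗮ`. Hence a rational subspace contains `Row(A)` exactly when
its rational orthogonal complement consists of rational vectors `q` with `A q = 0`, and the real
vectors orthogonal to all such `q` form the smallest rational subspace containing `Row(A)`. The
rational solutions of `A q = 0` form the kernel of the map `q ↦ A q` onto the `ℚ`-span of the
columns of `A`, so by rank–nullity that smallest subspace has dimension `ρ(A)`.
-/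

open Module Submodule

namespace LinearMap.BilinForm

theorem mem_orthogonal_span_iff {R M : Type*} [CommSemiring R] [AddCommMonoid M] [Module R M]
    {B : LinearMap.BilinForm R M} {S : Set M} {x : M} :
    x ∈ B.orthogonal (span R S) ↔ ∀ s ∈ S, B s x = 0 :=
  ⟨fun h s hs => h s (subset_span hs),
    fun h => span_le (p := LinearMap.ker (B.flip x)) |>.mpr h⟩

end LinearMap.BilinForm

section DotProduct

variable (R : Type*) [CommSemiring R] (ι : Type*) [Fintype ι]

abbrev dotProductForm : LinearMap.BilinForm R (ι → R) := dotProductBilin R R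

variable {ι}

theorem dotProductForm_isRefl : (dotProductForm R ι).IsRefl :=
  fun v w h => (dotProduct_comm w v).trans h

theorem dotProductForm_nondegenerate : (dotProductForm R ι).Nondegenerate :=
  ⟨fun v hv => dotProduct_eq_zero v hv,
    fun w hw => dotProduct_eq_zero w fun v => (dotProduct_comm w v).trans (hw v)⟩

theorem finrank_dotProductForm_orthogonal_add_finrank (K : Type*) [Field K]
    (W : Submodule K (ι → K)) :
    finrank K ((dotProductForm K ι).orthogonal W) + finrank K W = Fintype.card ι := by
  rw [LinearMap.BilinForm.finrank_orthogonal (dotProductForm_nondegenerate K),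
    finrank_fintype_fun_eq_card]
  have := finrank_fintype_fun_eq_card K (η := ι) ▸ W.finrank_le
  omega

end DotProduct

namespace Submodule

variable {K L : Type*} [Field K] [Field L] [Algebra K L] {ι : Type*}

variable (L) in
/-- The base change `V ⊗_K L`, realized as a subspace of `L^ι`. -/
def baseChangePi (V : Submodule K (ι → K)) : Submodule L (ι → L) :=
  span L ((Algebra.linearMap K L).compLeft ι '' V)

theorem baseChangePi_span (S : Set (ι → K)) :
    (span K S).baseChangePi L = span L ((Algebra.linearMap K L).compLeft ι '' S) := by
  rw [baseChangePi, ← map_coe, map_span, span_span_of_tower]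

theorem baseChangePi_le_iff {V : Submodule K (ι → K)} {X : Submodule L (ι → L)} :
    V.baseChangePi L ≤ X ↔
      V ≤ (X.restrictScalars K).comap ((Algebra.linearMap K L).compLeft ι) := by
  rw [baseChangePi, span_le, Set.image_subset_iff]
  rfl

theorem baseChangePi_mono {V W : Submodule K (ι → K)} (h : V ≤ W) :
    V.baseChangePi L ≤ W.baseChangePi L :=
  span_mono (Set.image_mono h)

variable [Fintype ι]

theorem finrank_baseChangePi (V : Submodule K (ι → K)) :
    finrank L (V.baseChangePi L) = finrank K V := by
  let b := finBasis K V
  have hli : LinearIndependent L fun s => algebraMap K L ∘ (b s : ι → K) :=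
    linearIndependent_algebraMap_comp_iff.mpr (b.linearIndependent.map' V.subtype V.ker_subtype)
  have hspan :
      V.baseChangePi L = span L (Set.range fun s => algebraMap K L ∘ (b s : ι → K)) := by
    conv_lhs => rw [← map_subtype_top V, ← b.span_eq, map_span]
    rw [baseChangePi_span, ← Set.range_comp, ← Set.range_comp]
    rfl
  rw [hspan, finrank_span_eq_card hli, Fintype.card_fin]

theorem baseChangePi_orthogonal (W : Submodule K (ι → K)) :
    ((dotProductForm K ι).orthogonal W).baseChangePi L =
      (dotProductForm L ι).orthogonal (W.baseChangePi L) := by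
  refine eq_of_le_of_finrank_eq (baseChangePi_le_iff.mpr fun u hu => ?_) ?_
  · rw [mem_comap, restrictScalars_mem, baseChangePi,
      LinearMap.BilinForm.mem_orthogonal_span_iff]
    rintro _ ⟨w, hw, rfl⟩
    change algebraMap K L ∘ w ⬝ᵥ algebraMap K L ∘ u = 0
    rw [← RingHom.map_dotProduct, show w ⬝ᵥ u = 0 from hu w hw, map_zero]
  · have h₁ := finrank_dotProductForm_orthogonal_add_finrank K W
    have h₂ := finrank_dotProductForm_orthogonal_add_finrank L (W.baseChangePi L)
    rw [finrank_baseChangePi] at h₂ ⊢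
    omega

variable (K) in
def rationalOrthogonal (X : Submodule L (ι → L)) : Submodule K (ι → K) :=
  (((dotProductForm L ι).orthogonal X).restrictScalars K).comap
    ((Algebra.linearMap K L).compLeft ι)

variable (K) in
/-- The minimal `K`-rational lift `L̂` of `X`. -/
def rationalHull (X : Submodule L (ι → L)) : Submodule L (ι → L) :=
  ((dotProductForm K ι).orthogonal (X.rationalOrthogonal K)).baseChangePi L

theorem le_rationalHull (X : Submodule L (ι → L)) : X ≤ X.rationalHull K := by
  have hX : (X.rationalOrthogonal K).baseChangePi L ≤ (dotProductForm L ι).orthogonal X :=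
    baseChangePi_le_iff.mpr le_rfl
  rw [rationalHull, baseChangePi_orthogonal]
  exact (LinearMap.BilinForm.le_orthogonal_orthogonal (dotProductForm_isRefl L)).trans
    (LinearMap.BilinForm.orthogonal_le hX)

theorem rationalHull_le {X : Submodule L (ι → L)} {V : Submodule K (ι → K)}
    (h : X ≤ V.baseChangePi L) : X.rationalHull K ≤ V.baseChangePi L := by
  have hV : (dotProductForm K ι).orthogonal V ≤ X.rationalOrthogonal K :=
    baseChangePi_le_iff.mp
      ((baseChangePi_orthogonal V).trans_le (LinearMap.BilinForm.orthogonal_le h))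
  calc X.rationalHull K
      ≤ ((dotProductForm K ι).orthogonal ((dotProductForm K ι).orthogonal V)).baseChangePi L :=
        baseChangePi_mono (LinearMap.BilinForm.orthogonal_le hV)
    _ = V.baseChangePi L := by
        rw [LinearMap.BilinForm.orthogonal_orthogonal (dotProductForm_nondegenerate K)
          (dotProductForm_isRefl K)]

theorem finrank_rationalHull_add_finrank_rationalOrthogonal (X : Submodule L (ι → L)) :
    finrank L (X.rationalHull K) + finrank K (X.rationalOrthogonal K) = Fintype.card ι := by
  rw [rationalHull, finrank_baseChangePi]
  exact finrank_dotProductForm_orthogonal_add_finrank K _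

theorem rationalOrthogonal_span_range {m : Type*} (v : m → ι → L) :
    (span L (Set.range v)).rationalOrthogonal K =
      LinearMap.ker (Fintype.linearCombination K fun j i => v i j) := by
  ext q
  rw [LinearMap.mem_ker, rationalOrthogonal, mem_comap, restrictScalars_mem,
    LinearMap.BilinForm.mem_orthogonal_span_iff, Set.forall_mem_range, funext_iff]
  refine forall_congr' fun i => ?_
  simp [Fintype.linearCombination_apply, dotProduct, Algebra.smul_def, mul_comm]

theorem finrank_rationalOrthogonal_span_range {m : Type*} (v : m → ι → L) :
    finrank K ((span L (Set.range v)).rationalOrthogonal K) +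
      finrank K (span K (Set.range fun j i => v i j)) = Fintype.card ι := by
  rw [rationalOrthogonal_span_range, ← Fintype.range_linearCombination, add_comm,
    LinearMap.finrank_range_add_finrank_ker, finrank_fintype_fun_eq_card]

end Submodule

theorem isRationalSubspace_iff {N : ℕ} {X : Submodule ℝ (Fin N → ℝ)} :
    IsRationalSubspace X ↔ ∃ V : Submodule ℚ (Fin N → ℚ), X = V.baseChangePi ℝ :=
  ⟨fun ⟨S, hS⟩ => ⟨span ℚ S, hS.trans (baseChangePi_span S).symm⟩,
    fun ⟨V, hV⟩ => ⟨V, hV⟩⟩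

/-- Every real `d × N` matrix `A` has a unique minimal rational lift:
there is a unique rational subspace `L̂ ⊆ ℝ^N` containing `Row(A)` with
`dim L̂ = ρ(A)`, and `L̂` is contained in every rational subspace containing `Row(A)`. -/
theorem exists_unique_minimal_rational_lift {d N : ℕ}
    (A : Matrix (Fin d) (Fin N) ℝ) :
    ∃ Lhat : Submodule ℝ (Fin N → ℝ),
      (IsRationalSubspace Lhat ∧
        Submodule.span ℝ (Set.range fun i : Fin d => A i) ≤ Lhat ∧
        Module.finrank ℝ Lhat = latticeRank A) ∧
      (∀ L : Submodule ℝ (Fin N → ℝ), IsRationalSubspace L →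
        Submodule.span ℝ (Set.range fun i : Fin d => A i) ≤ L → Lhat ≤ L) ∧
      (∀ L : Submodule ℝ (Fin N → ℝ),
        IsRationalSubspace L →
        Submodule.span ℝ (Set.range fun i : Fin d => A i) ≤ L →
        Module.finrank ℝ L = latticeRank A → L = Lhat) := by
  have hcols := finrank_rationalOrthogonal_span_range (K := ℚ) A
  set X := span ℝ (Set.range A)
  have hdim : finrank ℝ (X.rationalHull ℚ) = latticeRank A := by
    have hhull := finrank_rationalHull_add_finrank_rationalOrthogonal (K := ℚ) X
    rw [latticeRank]
    omega
  have hmin : ∀ L, IsRationalSubspace L → X ≤ L → X.rationalHull ℚ ≤ L := by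
    rintro L hL hXL
    obtain ⟨V, rfl⟩ := isRationalSubspace_iff.mp hL
    exact rationalHull_le hXL
  refine ⟨X.rationalHull ℚ, ⟨isRationalSubspace_iff.mpr ⟨_, rfl⟩, le_rationalHull X, hdim⟩,
    hmin, fun L hL hXL hLdim => ?_⟩
  exact (eq_of_le_of_finrank_eq (hmin L hL hXL) (hdim.trans hLdim.symm)).symm
end

section
/- Let α₁, …, α_N ∈ ℝ^{1+n}, κ₁, …, κ_N ∈ ℝ^k, and c₁, …, c_N ∈ ℂ, and assume there exists ξ ∈ ℝ^{1+n} with ⟨ξ, α_j⟩ = 1 for all j (pseudo-homogeneity). For λ ∈ ℝ define the exponential sum f_λ(z, t) = Σ_{j=1}^N c_j · exp(⟨z, α_j⟩ + λ⟨t, κ_j⟩) for (z, t) ∈ ℂ^{1+n} × ℂ^k, and define g(z, t) = Σ_{j=1}^N c_j · exp(⟨z, α_j⟩ + ⟨t, κ_j⟩). Let (λ_q) be a sequence of nonzero real numbers with λ_q → 0, and let (p_q) be a sequence of points with p_q ∈ 𝒜(f_{λ_q}) ⊆ ℝ^{1+n} × ℝ^k converging to a point (x*, t*) ∈ ℝ^{1+n}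 × ℝ^k. Then (x*, 0) ∈ 𝒜(g); in particular every limit point of amoebas along the deformation lies in 𝒜_B(f) × ℝ^k, where 𝒜_B(f) = {x ∈ ℝ^{1+n} : (x, 0) ∈ 𝒜(g)}. -/
open scoped BigOperators

/-- The amoeba of the deformed exponential sum
`f_λ(z, t) = Σ_j c_j exp(⟨z, α_j⟩ + λ⟨t, κ_j⟩)` on `ℂ^{1+n} × ℂ^k`:
the closure in `ℝ^{1+n} × ℝ^k` of the set of real parts of points of its zero set. -/
noncomputable def deformAmoeba {n k N : ℕ} (c : Fin N → ℂ)
    (α : Fin N → Fin (1 + n) → ℝ) (κ : Fin N → Fin k → ℝ) (lam : ℝ) :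
    Set ((Fin (1 + n) → ℝ) × (Fin k → ℝ)) :=
  closure {p : (Fin (1 + n) → ℝ) × (Fin k → ℝ) |
    ∃ (z : Fin (1 + n) → ℂ) (t : Fin k → ℂ),
      (∑ j : Fin N, c j * Complex.exp
        ((∑ i, z i * (α j i : ℂ)) + (lam : ℂ) * ∑ l, t l * (κ j l : ℂ))) = 0 ∧
      (fun i => (z i).re) = p.1 ∧ (fun l => (t l).re) = p.2}

/-!
The deformation only rescales the auxiliary variables: `f_{μλ}(z, t) = f_λ(z, μ t)`, so
`(x, t) ↦ (x, μ t)` maps `𝒜(f_{μλ})` into `𝒜(f_λ)`. Hence if `p_q = (x_q, t_q) ∈ 𝒜(f_{λ_q})`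
converges to `(x*, t*)`, the points `(x_q, λ_q t_q) ∈ 𝒜(g)` converge to `(x*, 0)`, which lies in
the closed set `𝒜(g)`.
-/

open Filter Topology

theorem deformAmoeba_mapsTo_smul {n k N : ℕ} (c : Fin N → ℂ)
    (α : Fin N → Fin (1 + n) → ℝ) (κ : Fin N → Fin k → ℝ) (μ lam : ℝ) :
    Set.MapsTo (Prod.map id (μ • ·)) (deformAmoeba c α κ (μ * lam))
      (deformAmoeba c α κ lam) := by
  refine Set.MapsTo.closure ?_ (by fun_prop)
  rintro ⟨x, t⟩ ⟨z, w, hzero, rfl, rfl⟩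
  refine ⟨z, fun l => μ * w l, ?_, rfl, ?_⟩
  · have hscale : ∀ j, ∑ l, (μ * w l) * (κ j l : ℂ) = μ * ∑ l, w l * (κ j l : ℂ) := fun j => by
      rw [Finset.mul_sum]
      exact Finset.sum_congr rfl fun l _ => mul_assoc _ _ _
    convert hzero using 4 with j
    rw [hscale, Complex.ofReal_mul]
    ring
  · funext l
    simp

theorem limit_point_in_caisson_general {n k N : ℕ} (c : Fin N → ℂ)
    (α : Fin N → Fin (1 + n) → ℝ) (κ : Fin N → Fin k → ℝ)
    (lam : ℕ → ℝ)
    (hlam : Filter.Tendsto lam Filter.atTop (nhds 0))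
    (p : ℕ → (Fin (1 + n) → ℝ) × (Fin k → ℝ))
    (hp : ∀ q, p q ∈ deformAmoeba c α κ (lam q))
    (xstar : Fin (1 + n) → ℝ) (tstar : Fin k → ℝ)
    (hconv : Filter.Tendsto p Filter.atTop (nhds (xstar, tstar))) :
    (xstar, (fun _ => 0 : Fin k → ℝ)) ∈ deformAmoeba c α κ 1 := by
  have hrescaled : ∀ q, Prod.map id (lam q • ·) (p q) ∈ deformAmoeba c α κ 1 := fun q =>
    deformAmoeba_mapsTo_smul c α κ (lam q) 1 (by simpa using hp q)
  have hlim : Tendsto (fun q => Prod.map id (lam q • ·) (p q)) atTop (𝓝 (xstar, 0)) := by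
    have h := hconv.fst_nhds.prodMk_nhds (hlam.smul hconv.snd_nhds)
    rwa [zero_smul] at h
  exact isClosed_closure.mem_of_tendsto hlim (Eventually.of_forall hrescaled)

/-- With `f_λ` the deformation of the pseudo-homogeneous exponential sum
`f` in directions `κ_j`, and `g = f_1`, every limit of points `p_q ∈ 𝒜(f_{λ_q})` with
`λ_q ≠ 0` and `λ_q → 0` has the form `(x*, t*)` with `(x*, 0) ∈ 𝒜(g)`; i.e. all such
limit points lie in `𝒜_B(f) × ℝ^k`. -/
theorem limit_point_in_caisson {n k N : ℕ} (c : Fin N → ℂ)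
    (α : Fin N → Fin (1 + n) → ℝ) (κ : Fin N → Fin k → ℝ)
    (ξ : Fin (1 + n) → ℝ) (hξ : ∀ j, ∑ i, ξ i * α j i = 1)
    (lam : ℕ → ℝ) (hlam0 : ∀ q, lam q ≠ 0)
    (hlam : Filter.Tendsto lam Filter.atTop (nhds 0))
    (p : ℕ → (Fin (1 + n) → ℝ) × (Fin k → ℝ))
    (hp : ∀ q, p q ∈ deformAmoeba c α κ (lam q))
    (xstar : Fin (1 + n) → ℝ) (tstar : Fin k → ℝ)
    (hconv : Filter.Tendsto p Filter.atTop (nhds (xstar, tstar))) :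
    (xstar, (fun _ => 0 : Fin k → ℝ)) ∈ deformAmoeba c α κ 1 :=
  limit_point_in_caisson_general c α κ lam hlam p hp xstar tstar hconv
end

section
/- For all real numbers φ₁ and φ₂, the complex number c = exp(i(−4φ₁ − 2φ₂)) + exp(i(−φ₁ + 4φ₂)) + exp(i(5φ₁ − 2φ₂)) satisfies −27 + 18|c|² + |c|⁴ − 8·Re(c³) ≤ 0. -/
/-!
The three exponentials `u, v, w` lie on the unit circle and have product `1`, so `conj u = v * w`
etc.; hence `c = u + v + w` and `conj c = u * v + v * w + w * u` are the elementary symmetric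
functions of the roots of `t³ - c t² + (conj c) t - 1`. The left-hand side is the discriminant of
this cubic, i.e. `P²` with `P = (u - v) (v - w) (w - u)`, and `conj P = -P` makes `P` purely
imaginary, so `P² ≤ 0`.
-/

open Complex ComplexConjugate

theorem sq_prod_sub_eq_of_mul_eq_one {R : Type*} [CommRing R] {u v w : R} (h : u * v * w = 1) :
    -27 + 18 * (u + v + w) * (u * v + v * w + w * u)
        + (u + v + w) ^ 2 * (u * v + v * w + w * u) ^ 2
        - 4 * ((u + v + w) ^ 3 + (u * v + v * w + w * u) ^ 3)
      = ((u - v) * (v - w) * (w - u)) ^ 2 := by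
  linear_combination (27 * (1 + u * v * w) - 18 * (u + v + w) * (u * v + v * w + w * u)
    + 4 * (u + v + w) ^ 3) * h

theorem Complex.conj_eq_mul_of_norm_eq_one {u v w : ℂ} (hu : ‖u‖ = 1) (h : u * v * w = 1) :
    conj u = v * w := by
  rw [← inv_eq_conj hu, inv_eq_of_mul_eq_one_right (by rw [← mul_assoc, h])]

theorem Complex.sq_eq_neg_sq_im_of_conj_eq_neg {z : ℂ} (hz : conj z = -z) :
    z ^ 2 = ((-z.im ^ 2 : ℝ) : ℂ) := by
  have hre : z.re = 0 := by
    have := congrArg re hz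
    simp only [conj_re, neg_re] at this
    linarith
  apply Complex.ext <;> simp [sq, hre]

theorem hypocycloid_le_zero_of_norm_eq_one {u v w : ℂ} (hu : ‖u‖ = 1) (hv : ‖v‖ = 1)
    (hw : ‖w‖ = 1) (h : u * v * w = 1) :
    -27 + 18 * ‖u + v + w‖ ^ 2 + ‖u + v + w‖ ^ 4 - 8 * ((u + v + w) ^ 3).re ≤ 0 := by
  have hcu : conj u = v * w := conj_eq_mul_of_norm_eq_one hu h
  have hcv : conj v = w * u := conj_eq_mul_of_norm_eq_one hv (by rw [← h]; ring)
  have hcw : conj w = u * v := conj_eq_mul_of_norm_eq_one hw (by rw [← h]; ring)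
  set c := u + v + w
  set P := (u - v) * (v - w) * (w - u)
  have hconj_c : conj c = u * v + v * w + w * u := by
    simp only [c, map_add, hcu, hcv, hcw]; ring
  have hconj_P : conj P = -P := by
    simp only [P, map_mul, map_sub, hcu, hcv, hcw]
    linear_combination (-(u - v) * (v - w) * (w - u)) * h
  have hdisc : ((-27 + 18 * ‖c‖ ^ 2 + ‖c‖ ^ 4 - 8 * (c ^ 3).re : ℝ) : ℂ) = P ^ 2 := by
    have h2 : (‖c‖ : ℂ) ^ 2 = c * conj c := (mul_conj' c).symm
    have h3 : ((2 * (c ^ 3).re : ℝ) : ℂ) = c ^ 3 + conj c ^ 3 := by rw [← map_pow, add_conj]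
    rw [← sq_prod_sub_eq_of_mul_eq_one h, ← hconj_c]
    push_cast at h3 ⊢
    linear_combination (18 + (‖c‖ : ℂ) ^ 2 + c * conj c) * h2 - 4 * h3
  rw [sq_eq_neg_sq_im_of_conj_eq_neg hconj_P, ofReal_inj] at hdisc
  rw [hdisc]
  exact neg_nonpos.mpr (sq_nonneg _)

/-- For all real `φ₁, φ₂`, the complex number
`c = exp(i(−4φ₁ − 2φ₂)) + exp(i(−φ₁ + 4φ₂)) + exp(i(5φ₁ − 2φ₂))`
satisfies `−27 + 18|c|² + |c|⁴ − 8·Re(c³) ≤ 0`. -/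
theorem hypocycloid_region_bound (φ₁ φ₂ : ℝ) (c : ℂ)
    (hc : c = Complex.exp (Complex.I * ((-4 : ℝ) * φ₁ + (-2 : ℝ) * φ₂)) +
      Complex.exp (Complex.I * ((-1 : ℝ) * φ₁ + (4 : ℝ) * φ₂)) +
      Complex.exp (Complex.I * ((5 : ℝ) * φ₁ + (-2 : ℝ) * φ₂))) :
    -27 + 18 * ‖c‖ ^ 2 + ‖c‖ ^ 4 - 8 * (c ^ 3).re ≤ 0 := by
  subst hc
  refine hypocycloid_le_zero_of_norm_eq_one ?_ ?_ ?_ ?_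
  iterate 3 · simp [norm_exp]
  rw [← exp_add, ← exp_add, ← exp_zero]
  congr 1
  push_cast
  ring
end

section
/- For all real numbers r > 3 and all θ ∈ ℝ, one has −27 + 18r² + r⁴ − 8r³·cos(3θ) > 0. (Consequently, the hypocycloid certificate |c| = r, h(r, θ) > 0 strictly improves the lopsidedness certificate |c| > 3 for the polynomial 1 + w³ + c·w⁴ + w⁹.) -/
/-! Since `cos (3θ) ≤ 1`, `h(r, θ)` is bounded below by its value at `θ = 0`, which factors as
`(r - 3)³ (r + 1)` and is therefore positive for `r > 3`. -/

lemma quartic_eq_cube_sub_three_mul (r : ℝ) :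
    -27 + 18 * r ^ 2 + r ^ 4 - 8 * r ^ 3 = (r - 3) ^ 3 * (r + 1) := by
  ring

lemma cube_sub_three_mul_le_hypocycloid {r : ℝ} (hr : 0 ≤ r) (θ : ℝ) :
    (r - 3) ^ 3 * (r + 1) ≤ -27 + 18 * r ^ 2 + r ^ 4 - 8 * r ^ 3 * Real.cos (3 * θ) := by
  have hcos : 8 * r ^ 3 * Real.cos (3 * θ) ≤ 8 * r ^ 3 :=
    mul_le_of_le_one_right (by positivity) (Real.cos_le_one _)
  linarith [quartic_eq_cube_sub_three_mul r]

/-- For all real `r > 3` and all `θ`, the hypocycloid function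
`h(r, θ) = −27 + 18r² + r⁴ − 8r³·cos(3θ)` is strictly positive. -/
theorem hypocycloid_positive_of_gt_three (r θ : ℝ) (hr : 3 < r) :
    0 < -27 + 18 * r ^ 2 + r ^ 4 - 8 * r ^ 3 * Real.cos (3 * θ) := by
  have hr3 : 0 < r - 3 := sub_pos.mpr hr
  calc 0 < (r - 3) ^ 3 * (r + 1) := by positivity
    _ ≤ _ := cube_sub_three_mul_le_hypocycloid (by linarith) θ
end

section
/- For all φ = (φ₁, φ₂, φ₃) ∈ ℝ³, the complex number c = exp(i(−3φ₁ − 3φ₂ − φ₃)) + exp(i(−φ₁ − φ₂ + 3φ₃)) + exp(i(φ₁ + 3φ₂ − φ₃)) + exp(i(3φ₁ + φ₂ − φ₃)) satisfies −4096 + 768|c|² + 6|c|⁴ + |c|⁶ − 54·Re(c⁴) ≤ 0. -/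
/-!
Put `μ = -2φ₁ - 2φ₂ + φ₃`, `α = -φ₁ - φ₂ - 2φ₃`, `β = φ₂ - φ₁`. The four exponents are `μ ± α` and
`-μ ± β`, so `c = 2cos α · e^{iμ} + 2cos β · e^{-iμ}` lies on the ellipse `(u cos μ, v sin μ)` with
`u, v = 2cos α ± 2cos β`, whose semi-axes satisfy `|u| + |v| ≤ 4`. In terms of `x = Re c`,
`y = Im c` the hypocycloid polynomial is `432 x²y² - (16 - x² - y²)³`, i.e. the astroid of radius 4,
the envelope of ellipses whose semi-axes sum to 4. Writing `x² = p³`, `y² = q³`, `16 = k³`, the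
AM-GM inequality gives `p + q ≤ k`, and then `k³ - p³ - q³ ≥ 3kpq` by the factorisation of
`a³ + b³ + c³ - 3abc`.
-/

open Complex

section OrderedRing

variable {R : Type*} [CommRing R] [LinearOrder R] [IsStrictOrderedRing R]

theorem three_mul_mul_mul_le_cube_sub_cube_sub_cube {k p q : R} (hpq : p + q ≤ k) :
    3 * k * p * q ≤ k ^ 3 - p ^ 3 - q ^ 3 := by
  have hfactor : 2 * (k ^ 3 - p ^ 3 - q ^ 3 - 3 * k * p * q) =
      (k - p - q) * ((k + p) ^ 2 + (k + q) ^ 2 + (p - q) ^ 2) := by ring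
  have : 0 ≤ (k - p - q) * ((k + p) ^ 2 + (k + q) ^ 2 + (p - q) ^ 2) :=
    mul_nonneg (by linarith) (by positivity)
  linarith

theorem astroid_inequality_of_add_le {k p q : R} (hp : 0 ≤ p) (hq : 0 ≤ q) (hpq : p + q ≤ k) :
    27 * k ^ 3 * p ^ 3 * q ^ 3 ≤ (k ^ 3 - p ^ 3 - q ^ 3) ^ 3 := by
  have hk : 0 ≤ k := by linarith
  calc 27 * k ^ 3 * p ^ 3 * q ^ 3 = (3 * k * p * q) ^ 3 := by ring
    _ ≤ (k ^ 3 - p ^ 3 - q ^ 3) ^ 3 :=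
      pow_le_pow_left₀ (by positivity) (three_mul_mul_mul_le_cube_sub_cube_sub_cube hpq) 3

theorem twenty_seven_mul_sq_mul_le_pow_three {x z : R} (hx : 0 ≤ x) (hz : 0 ≤ z) :
    27 * x ^ 2 * z ≤ (2 * x + z) ^ 3 := by
  nlinarith [mul_nonneg (sq_nonneg (x - z)) (by positivity : 0 ≤ 8 * x + z)]

theorem abs_add_add_abs_sub_le {x y r : R} (hx : |x| ≤ r) (hy : |y| ≤ r) :
    |x + y| + |x - y| ≤ r + r := by
  obtain ⟨hx₁, hx₂⟩ := abs_le.mp hx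
  obtain ⟨hy₁, hy₂⟩ := abs_le.mp hy
  rcases abs_cases (x + y) with ⟨h₁, -⟩ | ⟨h₁, -⟩ <;>
    rcases abs_cases (x - y) with ⟨h₂, -⟩ | ⟨h₂, -⟩ <;> linarith

end OrderedRing

theorem exists_cube_root {x : ℝ} (hx : 0 ≤ x) : ∃ p, 0 ≤ p ∧ p ^ 3 = x :=
  ⟨x ^ (3⁻¹ : ℝ), by positivity, Real.rpow_inv_natCast_pow hx three_ne_zero⟩

theorem ellipse_subset_astroid {a b r : ℝ} (hr : 0 < r) (hab : |a| + |b| ≤ r) (θ : ℝ) :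
    27 * r ^ 2 * (a * Real.cos θ) ^ 2 * (b * Real.sin θ) ^ 2 ≤
      (r ^ 2 - (a * Real.cos θ) ^ 2 - (b * Real.sin θ) ^ 2) ^ 3 := by
  obtain ⟨k, hk, hk3⟩ := exists_cube_root (sq_nonneg r)
  obtain ⟨p, hp, hp3⟩ := exists_cube_root (sq_nonneg (a * Real.cos θ))
  obtain ⟨q, hq, hq3⟩ := exists_cube_root (sq_nonneg (b * Real.sin θ))
  have cube_root_le {s z t : ℝ} (hs : 0 ≤ s) (hz : 0 ≤ z) (ht : 0 ≤ t)
      (ht3 : t ^ 3 = s ^ 2 * z) : 3 * r * t ≤ k * (2 * s + r * z) := by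
    refine le_of_pow_le_pow_left₀ three_ne_zero (by positivity) ?_
    calc (3 * r * t) ^ 3 = r ^ 2 * (27 * s ^ 2 * (r * z)) := by rw [mul_pow, ht3]; ring
      _ ≤ r ^ 2 * (2 * s + r * z) ^ 3 := by
        gcongr; exact twenty_seven_mul_sq_mul_le_pow_three hs (by positivity)
      _ = (k * (2 * s + r * z)) ^ 3 := by rw [mul_pow, hk3]
  have hpk := cube_root_le (abs_nonneg a) (sq_nonneg (Real.cos θ)) hp (by rw [hp3, sq_abs, mul_pow])
  have hqk := cube_root_le (abs_nonneg b) (sq_nonneg (Real.sin θ)) hq (by rw [hq3, sq_abs, mul_pow])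
  have hpq : p + q ≤ k := by
    refine le_of_mul_le_mul_left ?_ (by positivity : 0 < 3 * r)
    calc 3 * r * (p + q) ≤ k * (2 * (|a| + |b|) + r * (Real.cos θ ^ 2 + Real.sin θ ^ 2)) := by
          linarith
      _ ≤ k * (2 * r + r * 1) := by rw [Real.cos_sq_add_sin_sq]; gcongr
      _ = 3 * r * k := by ring
  have := astroid_inequality_of_add_le hp hq hpq
  rwa [hk3, hp3, hq3] at this

theorem hypocycloid_eq_astroid (c : ℂ) :
    -4096 + 768 * ‖c‖ ^ 2 + 6 * ‖c‖ ^ 4 + ‖c‖ ^ 6 - 54 * (c ^ 4).re =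
      432 * c.re ^ 2 * c.im ^ 2 - (16 - c.re ^ 2 - c.im ^ 2) ^ 3 := by
  have hre : (c ^ 4).re = c.re ^ 4 - 6 * c.re ^ 2 * c.im ^ 2 + c.im ^ 4 := by
    simp only [pow_succ, pow_zero, one_mul, mul_re, mul_im]; ring
  rw [show ‖c‖ ^ 4 = (‖c‖ ^ 2) ^ 2 by ring, show ‖c‖ ^ 6 = (‖c‖ ^ 2) ^ 3 by ring,
    Complex.sq_norm, normSq_apply, hre]
  ring

theorem exp_add_mul_I_add_exp_sub_mul_I (θ ψ : ℝ) :
    exp (↑(θ + ψ) * I) + exp (↑(θ - ψ) * I) = ↑(2 * Real.cos ψ) * exp (θ * I) := by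
  rw [ofReal_mul, ofReal_cos, ofReal_ofNat, two_cos]
  push_cast
  rw [add_mul, sub_mul, exp_add, exp_sub, neg_mul, exp_neg]
  ring

theorem re_ofReal_mul_exp_add_ofReal_mul_exp_neg (A B θ : ℝ) :
    (A * exp (θ * I) + B * exp (-θ * I)).re = (A + B) * Real.cos θ := by
  rw [← ofReal_neg, add_re, re_ofReal_mul, re_ofReal_mul, exp_ofReal_mul_I_re,
    exp_ofReal_mul_I_re, Real.cos_neg]
  ring

theorem im_ofReal_mul_exp_add_ofReal_mul_exp_neg (A B θ : ℝ) :
    (A * exp (θ * I) + B * exp (-θ * I)).im = (A - B) * Real.sin θ := by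
  rw [← ofReal_neg, add_im, im_ofReal_mul, im_ofReal_mul, exp_ofReal_mul_I_im,
    exp_ofReal_mul_I_im, Real.sin_neg]
  ring

theorem abs_two_mul_cos_le (θ : ℝ) : |2 * Real.cos θ| ≤ 2 := by
  rw [abs_mul, abs_two]
  nlinarith [Real.abs_cos_le_one θ]

/-- For all real `φ₁, φ₂, φ₃`, the complex number
`c = exp(i(−3φ₁ − 3φ₂ − φ₃)) + exp(i(−φ₁ − φ₂ + 3φ₃)) + exp(i(φ₁ + 3φ₂ − φ₃)) + exp(i(3φ₁ + φ₂ − φ₃))`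
satisfies `−4096 + 768|c|² + 6|c|⁴ + |c|⁶ − 54·Re(c⁴) ≤ 0`. -/
theorem hypocycloid_region_bound_bivariate (φ₁ φ₂ φ₃ : ℝ) (c : ℂ)
    (hc : c =
      Complex.exp (Complex.I * ((-3 : ℝ) * φ₁ + (-3 : ℝ) * φ₂ + (-1 : ℝ) * φ₃)) +
      Complex.exp (Complex.I * ((-1 : ℝ) * φ₁ + (-1 : ℝ) * φ₂ + (3 : ℝ) * φ₃)) +
      Complex.exp (Complex.I * ((1 : ℝ) * φ₁ + (3 : ℝ) * φ₂ + (-1 : ℝ) * φ₃)) +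
      Complex.exp (Complex.I * ((3 : ℝ) * φ₁ + (1 : ℝ) * φ₂ + (-1 : ℝ) * φ₃))) :
    -4096 + 768 * ‖c‖ ^ 2 + 6 * ‖c‖ ^ 4 + ‖c‖ ^ 6
      - 54 * (c ^ 4).re ≤ 0 := by
  set μ := -2 * φ₁ - 2 * φ₂ + φ₃
  set α := -φ₁ - φ₂ - 2 * φ₃
  set β := -φ₁ + φ₂
  have hc' : c = ↑(2 * Real.cos α) * exp (μ * I) + ↑(2 * Real.cos β) * exp (-μ * I) := by
    rw [hc, ← exp_add_mul_I_add_exp_sub_mul_I, ← ofReal_neg, ← exp_add_mul_I_add_exp_sub_mul_I]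
    simp only [μ, α, β]
    push_cast
    ring_nf
  have hre := re_ofReal_mul_exp_add_ofReal_mul_exp_neg (2 * Real.cos α) (2 * Real.cos β) μ
  have him := im_ofReal_mul_exp_add_ofReal_mul_exp_neg (2 * Real.cos α) (2 * Real.cos β) μ
  rw [← hc'] at hre him
  rw [hypocycloid_eq_astroid, sub_nonpos, hre, him]
  have haxes := abs_add_add_abs_sub_le (abs_two_mul_cos_le α) (abs_two_mul_cos_le β)
  convert ellipse_subset_astroid four_pos (haxes.trans_eq (by norm_num)) μ using 2 <;> norm_num
end
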